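/- arXiv:1701.02178 — 2 statements merged into one kernel-verified Lean document; each statement's English description precedes it below -/
import Mathlib

section
/- Let F be an F∞-field and let S be a nonempty subset of F \ {0} such that whenever x, y ∈ S, then x·y⁻¹ ∈ S, x·y ∈ S, and λx + μy ∈ S for every λ, μ ∈ F with λ + μ = 1. Then the set C = {(a,b) : a ≠ 0, b ≠ 0, a·b⁻¹ ∈ S} ∪ {(0,0)} is a congruence on F. -/
/-!
The nonzero elements form a group under multiplication and `S` is a subgroup of it, so
`a ~ b ↔ a b⁻¹ ∈ S` is reflexive, symmetric and transitive, and compatible with multiplication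
and negation. For addition, if `a b⁻¹ ∈ S` and `u = (b + c)⁻¹`, then
`(a + c) u = (b u) (a b⁻¹) + (c u) · 1` with `b u + c u = 1`, an affine combination of elements
of `S`; since `0 ∉ S` this also forces `a + c = 0 ↔ b + c = 0`.
-/

class FinfModule (M : Type*) extends Zero M, Neg M, Add M where
  add_assoc : ∀ a b c : M, a + b + c = a + (b + c)
  add_comm : ∀ a b : M, a + b = b + a
  add_idem : ∀ a : M, a + a = a
  add_neg : ∀ a : M, a + -a = 0
  neg_add : ∀ a b : M, -(a + b) = -a + -b
  neg_neg : ∀ a : M, - -a = a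

class FinfAlgebra (A : Type*) extends FinfModule A, Mul A where
  mul_assoc : ∀ a b c : A, a * b * c = a * (b * c)
  mul_zero : ∀ a : A, a * 0 = 0
  zero_mul : ∀ a : A, 0 * a = 0
  neg_mul : ∀ a b : A, -a * b = -(a * b)
  mul_neg : ∀ a b : A, a * -b = -(a * b)
  left_distrib : ∀ a b c : A, a * (b + c) = a * b + a * c
  right_distrib : ∀ a b c : A, (a + b) * c = a * c + b * c

class FinfUnitalAlgebra (A : Type*) extends FinfAlgebra A, One A where
  one_mul : ∀ a : A, 1 * a = a
  mul_one : ∀ a : A, a * 1 = a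

class FinfCommAlgebra (A : Type*) extends FinfUnitalAlgebra A where
  mul_comm : ∀ a b : A, a * b = b * a

structure FinfModCong (M : Type*) [FinfModule M] where
  rel : M → M → Prop
  refl : ∀ a : M, rel a a
  symm : ∀ {a b : M}, rel a b → rel b a
  trans : ∀ {a b c : M}, rel a b → rel b c → rel a c
  add_compat : ∀ {a b : M} (c : M), rel a b → rel (a + c) (b + c)
  neg_compat : ∀ {a b : M}, rel a b → rel (-a) (-b)

structure FinfCong (A : Type*) [FinfAlgebra A] extends FinfModCong A where
  mul_compat : ∀ {a b : A} (c : A), rel a b → rel (a * c) (b * c)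

namespace FinfModule

variable {M : Type*} [FinfModule M]

theorem zero_add (x : M) : 0 + x = 0 :=
  calc (0 : M) + x = x + -x + x := by rw [add_neg]
    _ = x + x + -x := by rw [add_assoc, add_assoc, add_comm (-x) x]
    _ = 0 := by rw [add_idem, add_neg]

theorem neg_zero : (-0 : M) = 0 :=
  calc (-0 : M) = -0 + - -0 := by rw [← neg_add, add_neg]
    _ = 0 := by rw [neg_neg, add_comm, zero_add]

end FinfModule

namespace FinfCommAlgebra

variable {F : Type*} [FinfCommAlgebra F]

instance toCommMonoid : CommMonoid F where
  mul_assoc := FinfAlgebra.mul_assoc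
  one_mul := FinfUnitalAlgebra.one_mul
  mul_one := FinfUnitalAlgebra.mul_one
  mul_comm := FinfCommAlgebra.mul_comm

theorem neg_mul_neg (a b : F) : -a * -b = a * b := by
  rw [FinfAlgebra.neg_mul, FinfAlgebra.mul_neg, FinfModule.neg_neg]

theorem mul_ne_zero_of_mul_eq_one {a c v : F} (ha : a ≠ 0) (hv : c * v = 1) : a * c ≠ 0 :=
  fun h => ha <| by rw [← mul_one a, ← hv, ← mul_assoc, h, FinfAlgebra.zero_mul]

theorem mul_inv_mul_mul_inv {a b z w : F} (hz : b * z = 1) : a * z * (b * w) = a * w := by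
  rw [mul_mul_mul_comm, mul_comm z w, ← mul_mul_mul_comm, hz, mul_one]

theorem one_mem_of_div_mem (hF : ∀ a : F, a ≠ 0 → ∃ b : F, a * b = 1)
    {S : Set F} (hS : S.Nonempty) (hS0 : (0 : F) ∉ S)
    (hdiv : ∀ x ∈ S, ∀ y ∈ S, ∀ z : F, y * z = 1 → x * z ∈ S) : (1 : F) ∈ S := by
  obtain ⟨s, hs⟩ := hS
  obtain ⟨t, hst⟩ := hF s (ne_of_mem_of_not_mem hs hS0)
  exact hst ▸ hdiv s hs s hs t hst

def RatioRel (S : Set F) (a b : F) : Prop :=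
  (a ≠ 0 ∧ b ≠ 0 ∧ ∃ z : F, b * z = 1 ∧ a * z ∈ S) ∨ (a = 0 ∧ b = 0)

variable {S : Set F}

theorem ratioRel_refl (hF : ∀ a : F, a ≠ 0 → ∃ b : F, a * b = 1) (h1 : (1 : F) ∈ S) (a : F) :
    RatioRel S a a := by
  by_cases ha : a = 0
  · exact Or.inr ⟨ha, ha⟩
  · obtain ⟨z, hz⟩ := hF a ha
    exact Or.inl ⟨ha, ha, z, hz, hz ▸ h1⟩

theorem inv_ratio_mem (h1 : (1 : F) ∈ S)
    (hdiv : ∀ x ∈ S, ∀ y ∈ S, ∀ z : F, y * z = 1 → x * z ∈ S) {a b z w : F}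
    (hz : b * z = 1) (hzS : a * z ∈ S) (hw : a * w = 1) : b * w ∈ S := by
  have hinv : a * z * (b * w) = 1 := by rw [mul_inv_mul_mul_inv hz, hw]
  exact one_mul (b * w) ▸ hdiv 1 h1 (a * z) hzS (b * w) hinv

theorem ratioRel_symm (hF : ∀ a : F, a ≠ 0 → ∃ b : F, a * b = 1) (h1 : (1 : F) ∈ S)
    (hdiv : ∀ x ∈ S, ∀ y ∈ S, ∀ z : F, y * z = 1 → x * z ∈ S) {a b : F}
    (hab : RatioRel S a b) : RatioRel S b a := by
  rcases hab with ⟨ha, hb, z, hz, hzS⟩ | ⟨ha, hb⟩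
  · obtain ⟨w, hw⟩ := hF a ha
    exact Or.inl ⟨hb, ha, w, hw, inv_ratio_mem h1 hdiv hz hzS hw⟩
  · exact Or.inr ⟨hb, ha⟩

theorem ratioRel_trans (hmul : ∀ x ∈ S, ∀ y ∈ S, x * y ∈ S) {a b c : F}
    (hab : RatioRel S a b) (hbc : RatioRel S b c) : RatioRel S a c := by
  rcases hab with ⟨ha, hb, z, hz, hzS⟩ | ⟨ha, hb⟩ <;>
    rcases hbc with ⟨hb', hc, w, hw, hwS⟩ | ⟨hb', hc⟩
  · exact Or.inl ⟨ha, hc, w, hw, mul_inv_mul_mul_inv hz ▸ hmul (a * z) hzS (b * w) hwS⟩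
  · exact absurd hb' hb
  · exact absurd hb hb'
  · exact Or.inr ⟨ha, hc⟩

theorem add_mul_inv_mem (h1 : (1 : F) ∈ S)
    (hconv : ∀ x ∈ S, ∀ y ∈ S, ∀ l m : F, l + m = 1 → l * x + m * y ∈ S)
    {a b c z u : F} (hz : b * z = 1) (hzS : a * z ∈ S) (hu : (b + c) * u = 1) :
    (a + c) * u ∈ S := by
  have hsum : b * u + c * u = 1 := by rw [← FinfAlgebra.right_distrib, hu]
  have hcomb : (a + c) * u = b * u * (a * z) + c * u * 1 := by
    rw [mul_comm (b * u), mul_inv_mul_mul_inv hz, mul_one, FinfAlgebra.right_distrib]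
  exact hcomb ▸ hconv (a * z) hzS 1 h1 (b * u) (c * u) hsum

theorem add_ne_zero_of_ratio_mem (hF : ∀ a : F, a ≠ 0 → ∃ b : F, a * b = 1)
    (hS0 : (0 : F) ∉ S) (h1 : (1 : F) ∈ S)
    (hconv : ∀ x ∈ S, ∀ y ∈ S, ∀ l m : F, l + m = 1 → l * x + m * y ∈ S)
    {a b c z : F} (hz : b * z = 1) (hzS : a * z ∈ S) (hbc : b + c ≠ 0) : a + c ≠ 0 := by
  obtain ⟨u, hu⟩ := hF (b + c) hbc
  intro hac
  exact hS0 (FinfAlgebra.zero_mul u ▸ hac ▸ add_mul_inv_mem h1 hconv hz hzS hu)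

theorem ratioRel_add_right (hF : ∀ a : F, a ≠ 0 → ∃ b : F, a * b = 1)
    (hS0 : (0 : F) ∉ S) (h1 : (1 : F) ∈ S)
    (hdiv : ∀ x ∈ S, ∀ y ∈ S, ∀ z : F, y * z = 1 → x * z ∈ S)
    (hconv : ∀ x ∈ S, ∀ y ∈ S, ∀ l m : F, l + m = 1 → l * x + m * y ∈ S)
    {a b : F} (c : F) (hab : RatioRel S a b) : RatioRel S (a + c) (b + c) := by
  rcases hab with ⟨ha, -, z, hz, hzS⟩ | ⟨rfl, rfl⟩
  · by_cases hbc : b + c = 0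
    · obtain ⟨w, hw⟩ := hF a ha
      have hwS := inv_ratio_mem h1 hdiv hz hzS hw
      refine Or.inr ⟨by_contra fun hac => ?_, hbc⟩
      exact add_ne_zero_of_ratio_mem hF hS0 h1 hconv hw hwS hac hbc
    · obtain ⟨u, hu⟩ := hF (b + c) hbc
      exact Or.inl ⟨add_ne_zero_of_ratio_mem hF hS0 h1 hconv hz hzS hbc, hbc, u, hu,
        add_mul_inv_mem h1 hconv hz hzS hu⟩
  · rw [FinfModule.zero_add]
    exact Or.inr ⟨rfl, rfl⟩

theorem ratioRel_neg {a b : F} (hab : RatioRel S a b) : RatioRel S (-a) (-b) := by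
  have neg_ne_zero {x : F} (hx : x ≠ 0) : -x ≠ 0 := fun h =>
    hx (by rw [← FinfModule.neg_neg x, h, FinfModule.neg_zero])
  rcases hab with ⟨ha, hb, z, hz, hzS⟩ | ⟨rfl, rfl⟩
  · exact Or.inl ⟨neg_ne_zero ha, neg_ne_zero hb, -z, by rwa [neg_mul_neg],
      by rwa [neg_mul_neg]⟩
  · rw [FinfModule.neg_zero]
    exact Or.inr ⟨rfl, rfl⟩

theorem ratioRel_mul_right (hF : ∀ a : F, a ≠ 0 → ∃ b : F, a * b = 1) {a b : F} (c : F)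
    (hab : RatioRel S a b) : RatioRel S (a * c) (b * c) := by
  rcases hab with ⟨ha, hb, z, hz, hzS⟩ | ⟨rfl, rfl⟩
  · by_cases hc : c = 0
    · rw [hc, FinfAlgebra.mul_zero, FinfAlgebra.mul_zero]
      exact Or.inr ⟨rfl, rfl⟩
    obtain ⟨v, hv⟩ := hF c hc
    refine Or.inl ⟨mul_ne_zero_of_mul_eq_one ha hv, mul_ne_zero_of_mul_eq_one hb hv, z * v,
      ?_, ?_⟩
    · rw [mul_mul_mul_comm, hz, hv, one_mul]
    · rwa [mul_mul_mul_comm, hv, mul_one]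
  · rw [FinfAlgebra.zero_mul]
    exact Or.inr ⟨rfl, rfl⟩

end FinfCommAlgebra

open FinfCommAlgebra in
theorem stmt8 {F : Type*} [FinfCommAlgebra F]
    (hF : ∀ a : F, a ≠ 0 → ∃ b : F, a * b = 1)
    (S : Set F) (hS : S.Nonempty) (hS0 : (0 : F) ∉ S)
    (hdiv : ∀ x ∈ S, ∀ y ∈ S, ∀ z : F, y * z = 1 → x * z ∈ S)
    (hmul : ∀ x ∈ S, ∀ y ∈ S, x * y ∈ S)
    (hconv : ∀ x ∈ S, ∀ y ∈ S, ∀ l m : F, l + m = 1 → l * x + m * y ∈ S) :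
    ∃ C : FinfCong F, ∀ a b : F,
      C.rel a b ↔ ((a ≠ 0 ∧ b ≠ 0 ∧ ∃ z : F, b * z = 1 ∧ a * z ∈ S) ∨
        (a = 0 ∧ b = 0)) := by
  have h1 := one_mem_of_div_mem hF hS hS0 hdiv
  let C : FinfCong F :=
    { rel := RatioRel S
      refl := ratioRel_refl hF h1
      symm := ratioRel_symm hF h1 hdiv
      trans := ratioRel_trans hmul
      add_compat := ratioRel_add_right hF hS0 h1 hdiv hconv
      neg_compat := ratioRel_neg
      mul_compat := ratioRel_mul_right hF }
  exact ⟨C, fun _ _ => Iff.rfl⟩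
end

section
/- Let A be a unital commutative F∞-algebra, x ∈ A, C a congruence on A, and n > m ≥ 1 integers such that (1 + xⁿ, 1) ∈ C and (1 + xᵐ, 1) ∈ C. Then (1 + x^{n+m}, 1) ∈ C. Moreover, if C is prime, then also (1 + x^{n−m}, 1) ∈ C. -/
def FinfProper {A : Type*} [FinfAlgebra A] (C : FinfCong A) : Prop :=
  ∃ a b : A, ¬ C.rel a b

def FinfPrime {A : Type*} [FinfAlgebra A] (C : FinfCong A) : Prop :=
  FinfProper C ∧
  (∀ a b c d : A, C.rel (a * c + b * d) (a * d + b * c) →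
      C.rel a b ∨ C.rel c d ∨ C.rel (a * c + b * d) 0 ∨ C.rel (a * d + b * c) 0) ∧
  (∀ a b c : A, C.rel (a * c) (b * c) → C.rel a b ∨ C.rel c 0)

def apow {A : Type*} [FinfAlgebra A] (a : A) : ℕ → A
  | 0 => a
  | 1 => a
  | n + 2 => a * apow a (n + 1)

/-!
Call `u` absorbed by `C` when `1 + u ~ 1`. Absorbed elements are closed under sums and
products, which gives the first claim. For the second put `k = n - m`, `y = x ^ k` and
`G t = 1 + y + ⋯ + y ^ t`. Since `y ^ n` is absorbed, `G n ~ G (n - 1)`. Primality applied to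
`(1 + y) * G (t + 1) + G t = G (t + 2)` and `(1 + y) * G t + G (t + 1) = G (t + 1)` turns
`G (t + 2) ~ G (t + 1)` into `1 + y ~ 1`, or `G (t + 1) ~ G t`, or `G s ~ 0` for some `s`;
descending to `t = 0` gives `1 + y ~ 1`. The last alternative is impossible: every term of
`x ^ (s * m) * G s` is a product of powers of `x ^ n` and `x ^ m`, so it is absorbed, and
`G s ~ 0` would force `1 ~ 0`.
-/

instance FinfModule.toAddCommSemigroup {M : Type*} [FinfModule M] : AddCommSemigroup M where
  add := (· + ·)
  add_assoc := FinfModule.add_assoc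
  add_comm := FinfModule.add_comm

instance FinfCommAlgebra.toCommMonoid_s12 {A : Type*} [FinfCommAlgebra A] : CommMonoid A where
  mul := (· * ·)
  one := 1
  mul_assoc := FinfAlgebra.mul_assoc
  one_mul := FinfUnitalAlgebra.one_mul
  mul_one := FinfUnitalAlgebra.mul_one
  mul_comm := FinfCommAlgebra.mul_comm

namespace FinfModule

variable {M : Type*} [FinfModule M]

lemma add_zero_eq_zero (a : M) : a + 0 = 0 := by
  calc a + 0 = a + (a + -a) := by rw [add_neg]
    _ = a + a + -a := (add_assoc a a (-a)).symm
    _ = 0 := by rw [add_idem, add_neg]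

end FinfModule

section

variable {A : Type*} [FinfCommAlgebra A]

lemma apow_eq_pow (x : A) {j : ℕ} (hj : 1 ≤ j) : apow x j = x ^ j := by
  obtain ⟨i, rfl⟩ : ∃ i, j = i + 1 := ⟨j - 1, by omega⟩
  induction i with
  | zero => rw [zero_add, pow_one]; rfl
  | succ i ih =>
    show x * apow x (i + 1) = x ^ (i + 2)
    rw [ih (by omega), pow_succ' x (i + 1)]

def geomSum (y : A) : ℕ → A
  | 0 => 1
  | t + 1 => geomSum y t + y ^ (t + 1)

lemma geomSum_add_geomSum (y : A) (t : ℕ) :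
    ∀ d, geomSum y (t + d) + geomSum y t = geomSum y (t + d)
  | 0 => FinfModule.add_idem _
  | d + 1 => by
    show geomSum y (t + d) + y ^ (t + d + 1) + geomSum y t = geomSum y (t + d) + y ^ (t + d + 1)
    rw [add_right_comm, geomSum_add_geomSum y t d]

lemma one_add_mul_geomSum (y : A) : ∀ t, (1 + y) * geomSum y t = geomSum y (t + 1)
  | 0 => by
    show (1 + y) * 1 = 1 + y ^ 1
    rw [mul_one, pow_one]
  | t + 1 => by
    show (1 + y) * (geomSum y t + y ^ (t + 1)) = geomSum y (t + 1) + y ^ (t + 2)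
    rw [FinfAlgebra.left_distrib, one_add_mul_geomSum y t, FinfAlgebra.right_distrib, one_mul,
      ← pow_succ', ← add_assoc, geomSum, add_assoc (geomSum y t), FinfModule.add_idem]

namespace FinfCong

variable (C : FinfCong A)

lemma rel_add_left {a b : A} (c : A) (h : C.rel a b) : C.rel (c + a) (c + b) := by
  simpa only [add_comm c] using C.add_compat c h

lemma rel_mul_left {a b : A} (c : A) (h : C.rel a b) : C.rel (c * a) (c * b) := by
  simpa only [mul_comm c] using C.mul_compat c h

lemma not_rel_one_zero (hC : FinfProper C) : ¬ C.rel 1 0 := by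
  intro h
  obtain ⟨a, b, hab⟩ := hC
  have hzero : ∀ c, C.rel c 0 := fun c => by
    simpa only [one_mul, FinfAlgebra.zero_mul] using C.mul_compat c h
  exact hab (C.trans (hzero a) (C.symm (hzero b)))

def Absorbs (u : A) : Prop := C.rel (1 + u) 1

variable {C}

lemma absorbs_one : C.Absorbs 1 := by
  rw [Absorbs, FinfModule.add_idem]
  exact C.refl 1

lemma Absorbs.add {u v : A} (hu : C.Absorbs u) (hv : C.Absorbs v) : C.Absorbs (u + v) := by
  have h := C.add_compat v hu
  rw [add_assoc] at h
  exact C.trans h hv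

lemma Absorbs.mul {u v : A} (hu : C.Absorbs u) (hv : C.Absorbs v) : C.Absorbs (u * v) := by
  have hvuv : C.rel (v + u * v) v := by
    simpa only [FinfAlgebra.right_distrib, one_mul] using C.mul_compat v hu
  have h₁ : C.rel (1 + (v + u * v)) 1 := C.trans (C.rel_add_left 1 hvuv) hv
  have h₂ : C.rel (1 + v + u * v) (1 + u * v) := C.add_compat (u * v) hv
  rw [add_assoc] at h₂
  exact C.trans (C.symm h₂) h₁

lemma Absorbs.pow {u : A} (hu : C.Absorbs u) : ∀ j : ℕ, C.Absorbs (u ^ j)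
  | 0 => absorbs_one
  | j + 1 => (hu.pow j).mul hu

lemma Absorbs.rel_add {s u : A} (hs : s + 1 = s) (hu : C.Absorbs u) : C.rel (s + u) s := by
  have h := C.rel_add_left s hu
  rwa [← add_assoc, hs] at h

lemma absorbs_mul_geomSum {u y : A} :
    ∀ s, (∀ j ≤ s, C.Absorbs (u * y ^ j)) → C.Absorbs (u * geomSum y s)
  | 0, h => by simpa only [geomSum, pow_zero] using h 0 le_rfl
  | s + 1, h => by
    show C.Absorbs (u * (geomSum y s + y ^ (s + 1)))
    rw [FinfAlgebra.left_distrib]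
    exact (absorbs_mul_geomSum s fun j hj => h j (by omega)).add (h (s + 1) le_rfl)

lemma not_rel_geomSum_zero (hC : FinfProper C) {x : A} {m k : ℕ}
    (hn : C.Absorbs (x ^ (m + k))) (hm : C.Absorbs (x ^ m)) (s : ℕ) :
    ¬ C.rel (geomSum (x ^ k) s) 0 := by
  intro h
  have habs : C.Absorbs (x ^ (s * m) * geomSum (x ^ k) s) := by
    refine absorbs_mul_geomSum s fun j hj => ?_
    obtain ⟨d, rfl⟩ : ∃ d, s = j + d := ⟨s - j, by omega⟩
    have hexp : x ^ ((j + d) * m) * (x ^ k) ^ j = (x ^ (m + k)) ^ j * (x ^ m) ^ d := by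
      simp only [← pow_mul, ← pow_add]
      ring_nf
    rw [hexp]
    exact (hn.pow j).mul (hm.pow d)
  have hzero : C.rel (1 + x ^ (s * m) * geomSum (x ^ k) s) 0 := by
    have := C.rel_add_left 1 (C.rel_mul_left (x ^ (s * m)) h)
    rwa [FinfAlgebra.mul_zero, FinfModule.add_zero_eq_zero] at this
  exact C.not_rel_one_zero hC (C.trans (C.symm habs) hzero)

lemma absorbs_of_rel_geomSum_succ (hC : FinfPrime C) {y : A}
    (hG : ∀ s, ¬ C.rel (geomSum y s) 0) :
    ∀ t, C.rel (geomSum y (t + 1)) (geomSum y t) → C.Absorbs y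
  | 0, h => by
    show C.rel (1 + y) 1
    simpa only [geomSum, zero_add, pow_one] using h
  | t + 1, h => by
    have hac : (1 + y) * geomSum y (t + 1) + 1 * geomSum y t = geomSum y (t + 2) := by
      rw [one_add_mul_geomSum, one_mul]
      exact geomSum_add_geomSum y t 2
    have had : (1 + y) * geomSum y t + 1 * geomSum y (t + 1) = geomSum y (t + 1) := by
      rw [one_add_mul_geomSum, one_mul, FinfModule.add_idem]
    rcases hC.2.1 (1 + y) 1 (geomSum y (t + 1)) (geomSum y t) (by rwa [hac, had])
      with hy | hstep | hzero | hzero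
    · exact hy
    · exact absorbs_of_rel_geomSum_succ hC hG t hstep
    · exact absurd (hac ▸ hzero) (hG _)
    · exact absurd (had ▸ hzero) (hG _)

lemma absorbs_of_absorbs_pow (hC : FinfPrime C) {y : A} (hG : ∀ s, ¬ C.rel (geomSum y s) 0)
    {N : ℕ} (hN : 0 < N) (hyN : C.Absorbs (y ^ N)) : C.Absorbs y := by
  obtain ⟨t, rfl⟩ : ∃ t, N = t + 1 := ⟨N - 1, by omega⟩
  exact absorbs_of_rel_geomSum_succ hC hG t <|
    hyN.rel_add (by simpa only [geomSum, zero_add] using geomSum_add_geomSum y 0 t)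

end FinfCong

end

theorem stmt12 {A : Type*} [FinfCommAlgebra A] (C : FinfCong A)
    (x : A) (n m : ℕ) (hm1 : 1 ≤ m) (hnm : m < n)
    (hn : C.rel (1 + apow x n) 1) (hm : C.rel (1 + apow x m) 1) :
    C.rel (1 + apow x (n + m)) 1 ∧
      (FinfPrime C → C.rel (1 + apow x (n - m)) 1) := by
  rw [apow_eq_pow x (by omega)] at hn hm
  change C.Absorbs (x ^ n) at hn
  change C.Absorbs (x ^ m) at hm
  refine ⟨?_, fun hC => ?_⟩
  · rw [apow_eq_pow x (by omega), pow_add]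
    exact hn.mul hm
  · obtain ⟨k, rfl⟩ : ∃ k, n = m + k := ⟨n - m, by omega⟩
    rw [Nat.add_sub_cancel_left, apow_eq_pow x (by omega)]
    refine FinfCong.absorbs_of_absorbs_pow hC (FinfCong.not_rel_geomSum_zero hC.1 hn hm)
      (N := m + k) (by omega) ?_
    rw [← pow_mul, mul_comm, pow_mul]
    exact hn.pow k
end
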